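/- Reliable periods determine membership: if v is u-reliable, then the natural color of v with respect to u is even if and only if u·v^ω ∈ L. -/

import Mathlib

/-!
The color of a `u`-reliable `v` is attained at `z = []`: the alternative that some power `v^i`
has a smaller color is excluded by stability, so `u v^ω ∈ L` iff the color is even. The real
content is that colors exist at all, which uses ω-regularity. Enrich a deterministic Muller
automaton for `L` by the set of states visited so far; then the transition `T x` of a word `x`
determines whether `u x^ω ∈ L`. Induct on the size of the right ideal `{T (w s)}`: for an
extension `w z`, some power `y = (w z)^j` has an idempotent transition. Either `y` generates a
smaller right ideal and has a small color by induction, or it generates the same one as `w`; all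
`u`-invariant idempotents of that kind agree on membership of `u y^ω`, so one parity fits them all.
-/

open scoped Classical

/-- Concatenation of a finite word with an infinite word. -/
def wcat {A : Type} (u : List A) (w : ℕ → A) : ℕ → A :=
  fun n => if h : n < u.length then u.get ⟨n, h⟩ else w (n - u.length)

/-- The infinite periodic word `v^ω`. -/
def wpow {A : Type} [Inhabited A] (v : List A) : ℕ → A :=
  fun n => v.getD (n % v.length) default

/-- The ultimately periodic word `u · v^ω`. -/
def upw {A : Type} [Inhabited A] (u v : List A) : ℕ → A := wcat u (wpow v)

/-- The finite word `v^i`. -/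
def wrep {A : Type} (v : List A) (i : ℕ) : List A := (List.replicate i v).flatten

/-- The right congruence `x ∼_L y`. -/
def simL {A : Type} (L : Set (ℕ → A)) (x y : List A) : Prop :=
  ∀ w : ℕ → A, wcat x w ∈ L ↔ wcat y w ∈ L

/-- `w` is `u`-invariant: `u ∼_L u·w`. -/
def UInv {A : Type} (L : Set (ℕ → A)) (u w : List A) : Prop := simL L u (u ++ w)

/-- `v` is relevant to `u`. -/
def URel {A : Type} (L : Set (ℕ → A)) (u v : List A) : Prop :=
  ∃ z : List A, UInv L u (v ++ z)

/-- `v` has natural color at most `c` wrt `u`. -/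
def ColorAtMost {A : Type} [Inhabited A] (L : Set (ℕ → A)) (u : List A) :
    ℕ → List A → Prop
  | c, v => ∀ z : List A, UInv L u (v ++ z) →
      ((upw u (v ++ z) ∈ L ↔ Even c) ∨
        ∃ i : ℕ, 0 < i ∧ ∃ c' : Fin c, ColorAtMost L u c' (wrep (v ++ z) i))
  termination_by c => c
  decreasing_by exact c'.isLt

/-- The natural color of the finite word `v` wrt `u`: `⊥` (i.e. `-∞`) if `v` is
irrelevant to `u`, and otherwise the minimal `c ≥ 0` as in the paper. -/
noncomputable def ncol {A : Type} [Inhabited A] (L : Set (ℕ → A)) (u v : List A) :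
    WithBot ℕ :=
  if URel L u v then ((sInf {c : ℕ | ColorAtMost L u c v} : ℕ) : WithBot ℕ) else ⊥

/-- `v` is stable wrt `u`. -/
def Stable {A : Type} [Inhabited A] (L : Set (ℕ → A)) (u v : List A) : Prop :=
  ∀ i : ℕ, 0 < i → ncol L u v = ncol L u (wrep v i)

/-- `v` is `u`-reliable. -/
def UReliable {A : Type} [Inhabited A] (L : Set (ℕ → A)) (u v : List A) : Prop :=
  UInv L u v ∧ Stable L u v

/-- The natural color of an ultimately periodic infinite word. -/
noncomputable def icol {A : Type} [Inhabited A] (L : Set (ℕ → A)) (w : ℕ → A) : ℕ :=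
  sInf {c : ℕ | ∃ u v : List A, v ≠ [] ∧ w = upw u v ∧ UInv L u v ∧
    ncol L u v = (c : WithBot ℕ)}

/-- The set of states visited infinitely often by a run. -/
def infSet {Q : Type} (r : ℕ → Q) : Set Q := {q | ∀ n : ℕ, ∃ m : ℕ, n ≤ m ∧ r m = q}

/-- The run of a complete deterministic automaton on an infinite word. -/
def runOf {A Q : Type} (δ : Q → A → Q) (q0 : Q) (w : ℕ → A) : ℕ → Q
  | 0 => q0
  | n + 1 => δ (runOf δ q0 w n) (w n)

/-- `L` is ω-regular: recognized by some deterministic Muller automaton. -/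
def OmegaRegular {A : Type} (L : Set (ℕ → A)) : Prop :=
  ∃ (Q : Type) (_ : Fintype Q) (q0 : Q) (δ : Q → A → Q) (α : Set (Set Q)),
    ∀ w : ℕ → A, w ∈ L ↔ infSet (runOf δ q0 w) ∈ α

section Words

variable {A : Type}

@[simp]
theorem wcat_nil (w : ℕ → A) : wcat [] w = w := by
  funext n
  simp [wcat]

theorem wcat_cons_zero (a : A) (x : List A) (w : ℕ → A) : wcat (a :: x) w 0 = a := by
  simp [wcat]

theorem wcat_cons_succ (a : A) (x : List A) (w : ℕ → A) (n : ℕ) :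
    wcat (a :: x) w (n + 1) = wcat x w n := by
  simp only [wcat, List.length_cons, Nat.add_lt_add_iff_right, List.get_eq_getElem,
    List.getElem_cons_succ, Nat.add_sub_add_right]

theorem wcat_append (x y : List A) (w : ℕ → A) :
    wcat (x ++ y) w = wcat x (wcat y w) := by
  induction x with
  | nil => simp
  | cons a x ih =>
    funext n
    cases n with
    | zero => simp only [List.cons_append, wcat_cons_zero]
    | succ n => simp only [List.cons_append, wcat_cons_succ, ih]

@[simp]
theorem wrep_zero (x : List A) : wrep x 0 = [] := rfl

theorem wrep_succ (x : List A) (j : ℕ) : wrep x (j + 1) = x ++ wrep x j := by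
  simp [wrep, List.replicate_succ]

theorem length_wrep (x : List A) (j : ℕ) : (wrep x j).length = j * x.length := by
  induction j with
  | zero => simp
  | succ j ih => rw [wrep_succ, List.length_append, ih]; ring

theorem wrep_ne_nil {x : List A} (hx : x ≠ []) {j : ℕ} (hj : 0 < j) : wrep x j ≠ [] := by
  obtain ⟨j, rfl⟩ := Nat.exists_eq_add_of_lt hj
  rw [wrep_succ]
  exact List.append_ne_nil_of_left_ne_nil hx _

@[simp]
theorem nil_wrep (j : ℕ) : wrep ([] : List A) j = [] := by
  simp [wrep]

theorem eq_of_wcat_eq_self {x : List A} (hx : x ≠ []) {w w' : ℕ → A}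
    (hw : wcat x w = w) (hw' : wcat x w' = w') : w = w' := by
  have hlen : 0 < x.length := List.length_pos_iff.2 hx
  funext n
  induction n using Nat.strong_induction_on with
  | _ n ih =>
    rw [← hw, ← hw']
    unfold wcat
    split_ifs with h
    · rfl
    · exact ih _ (by omega)

variable [Inhabited A]

theorem wcat_wpow_self (x : List A) : wcat x (wpow x) = wpow x := by
  funext n
  simp only [wcat, wpow, List.get_eq_getElem]
  split_ifs with h
  · rw [Nat.mod_eq_of_lt h, List.getD_eq_getElem]
  · rw [← Nat.mod_eq_sub_mod (by omega)]

theorem wcat_wrep_wpow (x : List A) (k : ℕ) : wcat (wrep x k) (wpow x) = wpow x := by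
  induction k with
  | zero => simp
  | succ k ih => rw [wrep_succ, wcat_append, ih, wcat_wpow_self]

theorem wpow_wrep (x : List A) {j : ℕ} (hj : 0 < j) : wpow (wrep x j) = wpow x := by
  rcases eq_or_ne x [] with rfl | hx
  · simp
  · exact eq_of_wcat_eq_self (wrep_ne_nil hx hj) (wcat_wpow_self _) (wcat_wrep_wpow x j)

theorem upw_wrep (u x : List A) {j : ℕ} (hj : 0 < j) : upw u (wrep x j) = upw u x := by
  rw [upw, upw, wpow_wrep x hj]

theorem wpow_append (x y : List A) : wpow (x ++ y) = wcat x (wpow (y ++ x)) := by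
  rcases eq_or_ne (x ++ y) [] with h | h
  · obtain ⟨rfl, rfl⟩ := List.append_eq_nil_iff.1 h
    simp
  · refine eq_of_wcat_eq_self h (wcat_wpow_self _) ?_
    rw [wcat_append, ← wcat_append y, wcat_wpow_self]

end Words

section Invariance

variable {A : Type} {L : Set (ℕ → A)} {u x : List A}

theorem UInv.wrep (h : UInv L u x) (j : ℕ) : UInv L u (wrep x j) := by
  induction j with
  | zero => intro w; rw [wrep_zero, List.append_nil]
  | succ j ih =>
    intro w
    rw [wrep_succ, ← List.append_assoc, wcat_append (u ++ x)]
    exact (ih w).trans (by rw [wcat_append]; exact h _)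

theorem UInv.upw_append_mem_iff [Inhabited A] (h : UInv L u x) (y : List A) :
    upw u (y ++ x) ∈ L ↔ upw u (x ++ y) ∈ L := by
  rw [upw, upw, wpow_append x y, ← wcat_append]
  exact h _

end Invariance

section Transitions

variable {A P : Type} (δ : P → A → P)

def transition (x : List A) : P → P := fun p => x.foldl δ p

theorem transition_append (x y : List A) :
    transition δ (x ++ y) = transition δ y ∘ transition δ x := by
  funext p
  simp [transition, List.foldl_append]

theorem transition_wrep (x : List A) (j : ℕ) :
    transition δ (wrep x j) = (transition δ x)^[j] := by
  induction j with
  | zero => rfl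
  | succ j ih => rw [wrep_succ, transition_append, ih, Function.iterate_succ]

/-- The principal right ideal of `w` in the transition monoid of `δ`. -/
def extensionTransitions (w : List A) : Set (P → P) :=
  Set.range fun s => transition δ (w ++ s)

theorem transition_mem_extensionTransitions (w : List A) :
    transition δ w ∈ extensionTransitions δ w :=
  ⟨[], congrArg (transition δ) (List.append_nil w)⟩

theorem extensionTransitions_append_subset (w z : List A) :
    extensionTransitions δ (w ++ z) ⊆ extensionTransitions δ w := by
  rintro _ ⟨s, rfl⟩
  exact ⟨z ++ s, congrArg (transition δ) (List.append_assoc w z s).symm⟩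

theorem extensionTransitions_wrep_subset (w : List A) {j : ℕ} (hj : 0 < j) :
    extensionTransitions δ (wrep w j) ⊆ extensionTransitions δ w := by
  obtain ⟨j, rfl⟩ := Nat.exists_eq_add_of_lt hj
  rw [Nat.zero_add, wrep_succ]
  exact extensionTransitions_append_subset δ w _

end Transitions

theorem exists_pow_isIdempotentElem {M : Type*} [Monoid M] [Finite M] (a : M) :
    ∃ n, 0 < n ∧ IsIdempotentElem (a ^ n) := by
  obtain ⟨i, j, hij, hpow⟩ := Finite.exists_ne_map_eq_of_infinite fun k : ℕ => a ^ k
  wlog hlt : i < j generalizing i j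
  · exact this j i hij.symm hpow.symm (by omega)
  obtain ⟨p, rfl⟩ := Nat.exists_eq_add_of_lt hlt
  have hcycle : ∀ t, a ^ (i + t * (p + 1)) = a ^ i := by
    intro t
    induction t with
    | zero => simp
    | succ t ih =>
      rw [add_mul, one_mul, ← add_assoc, pow_add, ih, ← pow_add, ← add_assoc, ← hpow]
  refine ⟨(i + 1) * (p + 1), by positivity, ?_⟩
  calc a ^ ((i + 1) * (p + 1)) * a ^ ((i + 1) * (p + 1))
      = a ^ (i * p + p + 1) * a ^ (i + (i + 1) * (p + 1)) := by
        rw [← pow_add, ← pow_add]; ring_nf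
    _ = a ^ ((i + 1) * (p + 1)) := by rw [hcycle, ← pow_add]; ring_nf

theorem exists_transition_wrep_idempotent {A P : Type} [Finite P] (δ : P → A → P) (x : List A) :
    ∃ j, 0 < j ∧ transition δ (wrep x j) ∘ transition δ (wrep x j) = transition δ (wrep x j) := by
  have : Finite (Function.End P) := inferInstanceAs (Finite (P → P))
  obtain ⟨j, hj, hidem⟩ := exists_pow_isIdempotentElem (M := Function.End P) (transition δ x)
  exact ⟨j, hj, by rw [transition_wrep]; exact hidem⟩

section Colors

variable {A P : Type} [Inhabited A] {L : Set (ℕ → A)} {u : List A} {δ : P → A → P}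

def UpwDeterminedBy (L : Set (ℕ → A)) (u : List A) (δ : P → A → P) : Prop :=
  ∀ x y : List A, x ≠ [] → y ≠ [] → transition δ x = transition δ y →
    (upw u x ∈ L ↔ upw u y ∈ L)

/-- `y y'` and `y' y` have the transitions of `y'` and `y`, and `u (y' y)^ω ∈ L ↔ u (y y')^ω ∈ L`
by the `u`-invariance of `y'`. -/
theorem UpwDeterminedBy.mem_iff_of_idempotent (hdet : UpwDeterminedBy L u δ)
    {y y' : List A} (hy : y ≠ []) (hy' : y' ≠ []) (hinv' : UInv L u y')
    (hidem : transition δ y ∘ transition δ y = transition δ y)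
    (hidem' : transition δ y' ∘ transition δ y' = transition δ y')
    (hideal : extensionTransitions δ y = extensionTransitions δ y') :
    upw u y ∈ L ↔ upw u y' ∈ L := by
  have hmem' : transition δ y' ∈ extensionTransitions δ y :=
    hideal ▸ transition_mem_extensionTransitions δ y'
  have hmem : transition δ y ∈ extensionTransitions δ y' :=
    hideal ▸ transition_mem_extensionTransitions δ y
  obtain ⟨s, hs⟩ : ∃ s, transition δ (y ++ s) = transition δ y' := hmem'
  obtain ⟨t, ht⟩ : ∃ t, transition δ (y' ++ t) = transition δ y := hmem
  have hyy' : transition δ (y ++ y') = transition δ y' := by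
    rw [transition_append, ← hs, transition_append, Function.comp_assoc, hidem]
  have hy'y : transition δ (y' ++ y) = transition δ y := by
    rw [transition_append, ← ht, transition_append, Function.comp_assoc, hidem']
  calc upw u y ∈ L ↔ upw u (y' ++ y) ∈ L :=
        (hdet _ _ (List.append_ne_nil_of_left_ne_nil hy' y) hy hy'y).symm
    _ ↔ upw u (y ++ y') ∈ L := (hinv'.upw_append_mem_iff y).symm
    _ ↔ upw u y' ∈ L := hdet _ _ (List.append_ne_nil_of_left_ne_nil hy y') hy' hyy'

theorem exists_gt_le_add_two_even_iff (C : ℕ) (p : Prop) : ∃ c, C < c ∧ c ≤ C + 2 ∧ (Even c ↔ p) := by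
  by_cases h : Even (C + 1) ↔ p
  · exact ⟨C + 1, by omega, by omega, h⟩
  · refine ⟨C + 2, by omega, le_rfl, ?_⟩
    rw [Nat.even_add_one]
    tauto

variable [Finite P]

/-- The color exceeds the bound `C` for words with smaller right ideals and has the parity shared
by the `u`-invariant idempotents generating the same right ideal as `w`. -/
theorem UpwDeterminedBy.exists_colorAtMost_of_lt_ncard (hdet : UpwDeterminedBy L u δ) {n C : ℕ}
    (hC : ∀ y : List A, y ≠ [] → (extensionTransitions δ y).ncard ≤ n →
      ∃ c ≤ C, ColorAtMost L u c y)
    {w : List A} (hw : w ≠ []) (hwn : (extensionTransitions δ w).ncard ≤ n + 1) :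
    ∃ c ≤ C + 2, ColorAtMost L u c w := by
  obtain ⟨c, hCc, hc, hparity⟩ := exists_gt_le_add_two_even_iff C (∃ y : List A, y ≠ [] ∧
    UInv L u y ∧ transition δ y ∘ transition δ y = transition δ y ∧
    extensionTransitions δ y = extensionTransitions δ w ∧ upw u y ∈ L)
  refine ⟨c, hc, ?_⟩
  rw [ColorAtMost]
  intro z hz
  have hwz : w ++ z ≠ [] := List.append_ne_nil_of_left_ne_nil hw z
  obtain ⟨j, hj, hidem⟩ := exists_transition_wrep_idempotent δ (w ++ z)
  set y := wrep (w ++ z) j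
  have hy : y ≠ [] := wrep_ne_nil hwz hj
  have hsub : extensionTransitions δ y ⊆ extensionTransitions δ w :=
    (extensionTransitions_wrep_subset δ _ hj).trans (extensionTransitions_append_subset δ w z)
  by_cases hyn : (extensionTransitions δ y).ncard ≤ n
  · obtain ⟨c', hc', hcol⟩ := hC y hy hyn
    exact Or.inr ⟨j, hj, ⟨c', by omega⟩, hcol⟩
  have hyw : extensionTransitions δ y = extensionTransitions δ w :=
    Set.eq_of_subset_of_ncard_le hsub (by omega) (Set.toFinite _)
  refine Or.inl ?_
  rw [← upw_wrep u (w ++ z) hj, hparity]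
  constructor
  · exact fun hmem => ⟨y, hy, hz.wrep j, hidem, hyw, hmem⟩
  · rintro ⟨y', hy', hinv', hidem', hy'w, hmem⟩
    exact (hdet.mem_iff_of_idempotent hy hy' hinv' hidem hidem'
      (hyw.trans hy'w.symm)).2 hmem

theorem UpwDeterminedBy.exists_colorAtMost_le (hdet : UpwDeterminedBy L u δ) (n : ℕ) :
    ∃ C, ∀ w : List A, w ≠ [] → (extensionTransitions δ w).ncard ≤ n →
      ∃ c ≤ C, ColorAtMost L u c w := by
  induction n with
  | zero =>
    refine ⟨0, fun w _ hw0 => ?_⟩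
    have := (Set.ncard_pos (Set.toFinite _)).2 ⟨_, transition_mem_extensionTransitions δ w⟩
    omega
  | succ n ih =>
    obtain ⟨C, hC⟩ := ih
    exact ⟨C + 2, fun w hw hwn => hdet.exists_colorAtMost_of_lt_ncard hC hw hwn⟩

theorem UpwDeterminedBy.exists_colorAtMost (hdet : UpwDeterminedBy L u δ) {w : List A}
    (hw : w ≠ []) : ∃ c, ColorAtMost L u c w := by
  obtain ⟨C, hC⟩ := hdet.exists_colorAtMost_le (extensionTransitions δ w).ncard
  obtain ⟨c, -, hc⟩ := hC w hw le_rfl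
  exact ⟨c, hc⟩

end Colors

section Muller

variable {A Q : Type} (δ : Q → A → Q)

theorem runOf_succ' (q : Q) (w : ℕ → A) (n : ℕ) :
    runOf δ q w (n + 1) = runOf δ (δ q (w 0)) (fun i => w (i + 1)) n := by
  induction n with
  | zero => rfl
  | succ n ih => rw [runOf, ih, runOf]

theorem runOf_wcat_cons_succ (q : Q) (a : A) (x : List A) (w : ℕ → A) (n : ℕ) :
    runOf δ q (wcat (a :: x) w) (n + 1) = runOf δ (δ q a) (wcat x w) n := by
  rw [runOf_succ', wcat_cons_zero]
  simp only [wcat_cons_succ]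

theorem runOf_wcat (q : Q) (x : List A) (w : ℕ → A) (n : ℕ) :
    runOf δ q (wcat x w) (x.length + n) = runOf δ (x.foldl δ q) w n := by
  induction x generalizing q with
  | nil => simp
  | cons a x ih => rw [List.length_cons, add_right_comm, runOf_wcat_cons_succ, ih]; rfl

def visitStep (p : Q × Set Q) (a : A) : Q × Set Q := (δ p.1 a, insert p.1 p.2)

theorem foldl_visitStep (x : List A) (w : ℕ → A) (q : Q) (S : Set Q) :
    x.foldl (visitStep δ) (q, S) =
      (x.foldl δ q, S ∪ {p | ∃ j < x.length, runOf δ q (wcat x w) j = p}) := by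
  induction x generalizing q S with
  | nil => simp
  | cons a x ih =>
    rw [List.foldl_cons, visitStep, ih, List.foldl_cons]
    congr 1
    ext p
    simp only [Set.mem_union, Set.mem_insert_iff, Set.mem_ofPred_eq, List.length_cons]
    constructor
    · rintro ((rfl | hS) | ⟨j, hj, rfl⟩)
      · exact Or.inr ⟨0, by omega, rfl⟩
      · exact Or.inl hS
      · exact Or.inr ⟨j + 1, by omega, runOf_wcat_cons_succ δ q a x w j⟩
    · rintro (hS | ⟨_ | j, hj, rfl⟩)
      · exact Or.inl (Or.inr hS)
      · exact Or.inl (Or.inl rfl)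
      · exact Or.inr ⟨j, by omega, (runOf_wcat_cons_succ δ q a x w j).symm⟩

theorem infSet_eq_blocks (r : ℕ → Q) {m : ℕ} (hm : 0 < m) :
    infSet r = {p | ∀ N, ∃ k ≥ N, ∃ j < m, r (k * m + j) = p} := by
  ext p
  constructor
  · intro hp N
    obtain ⟨n, hn, rfl⟩ := hp (N * m)
    exact ⟨n / m, (Nat.le_div_iff_mul_le hm).2 hn, n % m, Nat.mod_lt n hm,
      by rw [Nat.div_add_mod']⟩
  · intro hp N
    obtain ⟨k, hk, j, -, rfl⟩ := hp N
    exact ⟨k * m + j, le_add_right (hk.trans (Nat.le_mul_of_pos_right k hm)), rfl⟩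

theorem infSet_shift (r : ℕ → Q) (c : ℕ) : infSet (fun n => r (c + n)) = infSet r := by
  ext p
  constructor
  · intro hp N
    obtain ⟨m, hm, hr⟩ := hp N
    exact ⟨c + m, by omega, hr⟩
  · intro hp N
    obtain ⟨m, hm, hr⟩ := hp (c + N)
    refine ⟨m - c, by omega, ?_⟩
    show r (c + (m - c)) = p
    rwa [Nat.add_sub_cancel' (by omega)]

variable [Inhabited A]

theorem mem_visited_block_iff (x : List A) (q p : Q) (k : ℕ) :
    p ∈ (transition (visitStep δ) x (((transition (visitStep δ) x)^[k] (q, ∅)).1, ∅)).2 ↔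
      ∃ j < x.length, runOf δ q (wpow x) (k * x.length + j) = p := by
  rw [← transition_wrep, transition, transition, foldl_visitStep δ _ (wpow x),
    foldl_visitStep δ _ (wpow x)]
  have hblock : ∀ j, runOf δ q (wpow x) (k * x.length + j) =
      runOf δ ((wrep x k).foldl δ q) (wcat x (wpow x)) j := by
    intro j
    rw [← runOf_wcat, wcat_wpow_self, wcat_wrep_wpow, length_wrep]
  simp only [Set.empty_union, Set.mem_ofPred_eq, hblock]

/-- A state recurs in the run on `x^ω` iff it is visited during infinitely many `x`-blocks,
and the states visited in the `k`-th block are read off the transition of `x` under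
`visitStep δ`. -/
theorem infSet_runOf_wpow_eq {x y : List A} (hx : x ≠ []) (hy : y ≠ [])
    (h : transition (visitStep δ) x = transition (visitStep δ) y) (q : Q) :
    infSet (runOf δ q (wpow x)) = infSet (runOf δ q (wpow y)) := by
  rw [infSet_eq_blocks _ (List.length_pos_iff.2 hx), infSet_eq_blocks _ (List.length_pos_iff.2 hy)]
  simp only [← mem_visited_block_iff, h]

theorem infSet_runOf_upw (q : Q) (u x : List A) :
    infSet (runOf δ q (upw u x)) = infSet (runOf δ (u.foldl δ q) (wpow x)) :=
  (infSet_shift _ u.length).symm.trans (congrArg infSet (funext (runOf_wcat δ q u (wpow x))))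

theorem upwDeterminedBy_visitStep {q0 : Q} {α : Set (Set Q)} {L : Set (ℕ → A)}
    (hL : ∀ w : ℕ → A, w ∈ L ↔ infSet (runOf δ q0 w) ∈ α) (u : List A) :
    UpwDeterminedBy L u (visitStep δ) := by
  intro x y hx hy hxy
  rw [hL, hL, infSet_runOf_upw, infSet_runOf_upw, infSet_runOf_wpow_eq δ hx hy hxy]

end Muller

section Color

variable {A : Type} [Inhabited A] {L : Set (ℕ → A)} {u v : List A}

theorem ncol_of_UInv (h : UInv L u v) :
    ncol L u v = ((sInf {c : ℕ | ColorAtMost L u c v} : ℕ) : WithBot ℕ) :=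
  if_pos ⟨[], by rwa [List.append_nil]⟩

theorem UReliable.exists_ncol_eq_even_iff (hrel : UReliable L u v)
    (hcol : ∃ c, ColorAtMost L u c v) :
    ∃ c : ℕ, ncol L u v = (c : WithBot ℕ) ∧ (Even c ↔ upw u v ∈ L) := by
  obtain ⟨hinv, hstable⟩ := hrel
  refine ⟨_, ncol_of_UInv hinv, ?_⟩
  have hmin : ColorAtMost L u (sInf {c : ℕ | ColorAtMost L u c v}) v := Nat.sInf_mem hcol
  rw [ColorAtMost] at hmin
  rcases hmin [] (by rwa [List.append_nil]) with hmem | ⟨i, hi, c', hc'⟩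
  · rw [List.append_nil] at hmem
    exact hmem.symm
  · rw [List.append_nil] at hc'
    have hcol_eq := hstable i hi
    rw [ncol_of_UInv hinv, ncol_of_UInv (hinv.wrep i), Nat.cast_inj] at hcol_eq
    have hle : sInf {c : ℕ | ColorAtMost L u c (wrep v i)} ≤ c' := Nat.sInf_le hc'
    exact absurd (hcol_eq.trans_le hle) (not_le.2 c'.isLt)

end Color

/-- reliable periods determine membership: the natural color of a
`u`-reliable `v` is a natural number which is even iff `u·v^ω ∈ L`. -/
theorem reliable_periods_determine {A : Type} [Inhabited A] (L : Set (ℕ → A))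
    (hreg : OmegaRegular L) (u v : List A) (hv : v ≠ []) (hrel : UReliable L u v) :
    ∃ c : ℕ, ncol L u v = (c : WithBot ℕ) ∧ (Even c ↔ upw u v ∈ L) := by
  obtain ⟨Q, _, q0, δ, α, hL⟩ := hreg
  exact hrel.exists_ncol_eq_even_iff ((upwDeterminedBy_visitStep δ hL u).exists_colorAtMost hv)
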